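/- arXiv:1908.07879 — 2 statements merged into one kernel-verified Lean document; each statement's English description precedes it below -/
import Mathlib

section
/- Let (Ω₁, μ₁), (Ω₂, μ₂), (Ω₃, μ₃) be σ-finite measure spaces, φ ∈ L^∞(Ω₁ × Ω₂ × Ω₃), K₁ ∈ L²(Ω₁ × Ω₂), and K₂ ∈ L²(Ω₂ × Ω₃). Define Λ(φ)(K₁, K₂)(t₁, t₃) = ∫_{Ω₂} φ(t₁, t₂, t₃) K₁(t₁, t₂) K₂(t₂, t₃) dμ₂(t₂). Then Λ(φ)(K₁, K₂) ∈ L²(Ω₁ × Ω₃) and ‖Λ(φ)(K₁, K₂)‖_{L²} ≤ ‖φ‖_∞ ‖K₁‖_{L²} ‖K₂‖_{L²}. -/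
open MeasureTheory
open scoped ENNReal

/-! For a.e. `(t₁, t₃)` the integrand is bounded by `‖φ‖_∞ |K₁ (t₁, ·)| |K₂ (·, t₃)|`, so
Cauchy–Schwarz in `t₂` gives `|Λ (t₁, t₃)| ≤ ‖φ‖_∞ a t₁ b t₃` with `a t₁ = ‖K₁ (t₁, ·)‖₂` and
`b t₃ = ‖K₂ (·, t₃)‖₂`. The L² norm of this product function on `Ω₁ × Ω₃` is
`‖φ‖_∞ ‖a‖₂ ‖b‖₂`, and by Tonelli `‖a‖₂ = ‖K₁‖₂` and `‖b‖₂ = ‖K₂‖₂`. -/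

section LpProduct

variable {α β : Type*} [MeasurableSpace α] [MeasurableSpace β] {μ : Measure α} {ν : Measure β}
  {p : ℝ≥0∞}

theorem eLpNorm_eLpNorm_curry [SFinite ν] {ε : Type*} [TopologicalSpace ε] [ContinuousENorm ε]
    {f : α × β → ε} (hp₀ : p ≠ 0) (hp : p ≠ ∞) (hf : AEStronglyMeasurable f (μ.prod ν)) :
    eLpNorm (fun x => eLpNorm (fun y => f (x, y)) p ν) p μ = eLpNorm f p (μ.prod ν) := by
  have hr : p.toReal ≠ 0 := ENNReal.toReal_ne_zero.mpr ⟨hp₀, hp⟩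
  simp only [eLpNorm_eq_lintegral_rpow_enorm_toReal hp₀ hp, enorm_eq_self,
    ← ENNReal.rpow_mul, one_div_mul_cancel hr, ENNReal.rpow_one]
  rw [lintegral_prod _ (hf.enorm.pow_const _)]

theorem aemeasurable_eLpNorm_curry [SFinite ν] {ε : Type*} [TopologicalSpace ε]
    [ContinuousENorm ε] {f : α × β → ε} (hp₀ : p ≠ 0) (hp : p ≠ ∞)
    (hf : AEStronglyMeasurable f (μ.prod ν)) :
    AEMeasurable (fun x => eLpNorm (fun y => f (x, y)) p ν) μ := by
  simp only [eLpNorm_eq_lintegral_rpow_enorm_toReal hp₀ hp]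
  exact (hf.enorm.pow_const _).lintegral_prod_right'.pow_const _

theorem aemeasurable_eLpNorm_curry_swap [SFinite μ] [SFinite ν] {ε : Type*} [TopologicalSpace ε]
    [ContinuousENorm ε] {f : α × β → ε} (hp₀ : p ≠ 0) (hp : p ≠ ∞)
    (hf : AEStronglyMeasurable f (μ.prod ν)) :
    AEMeasurable (fun y => eLpNorm (fun x => f (x, y)) p μ) ν :=
  aemeasurable_eLpNorm_curry (f := fun z => f z.swap) hp₀ hp hf.prod_swap

theorem eLpNorm_eLpNorm_curry_swap [SFinite μ] [SFinite ν] {ε : Type*} [TopologicalSpace ε]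
    [ContinuousENorm ε] {f : α × β → ε} (hp₀ : p ≠ 0) (hp : p ≠ ∞)
    (hf : AEStronglyMeasurable f (μ.prod ν)) :
    eLpNorm (fun y => eLpNorm (fun x => f (x, y)) p μ) p ν = eLpNorm f p (μ.prod ν) :=
  (eLpNorm_eLpNorm_curry hp₀ hp hf.prod_swap).trans
    (eLpNorm_comp_measurePreserving hf Measure.measurePreserving_swap)

theorem eLpNorm_prod_le_of_ae_enorm_le_mul [SFinite ν] {ε : Type*} [ENorm ε] {F : α × β → ε}
    {C : ℝ≥0∞} {a : α → ℝ≥0∞} {b : β → ℝ≥0∞} (hp₀ : p ≠ 0) (hp : p ≠ ∞)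
    (ha : AEMeasurable a μ) (hb : AEMeasurable b ν)
    (hF : ∀ᵐ z ∂μ.prod ν, ‖F z‖ₑ ≤ C * (a z.1 * b z.2)) :
    eLpNorm F p (μ.prod ν) ≤ C * eLpNorm a p μ * eLpNorm b p ν := by
  have hr : 0 ≤ p.toReal := ENNReal.toReal_nonneg
  have hr' : 0 ≤ 1 / p.toReal := by positivity
  have hr₀ : p.toReal ≠ 0 := ENNReal.toReal_ne_zero.mpr ⟨hp₀, hp⟩
  refine (eLpNorm_mono_enorm_ae (g := fun z => C * (a z.1 * b z.2)) (by simpa using hF)).trans_eq ?_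
  simp only [eLpNorm_eq_lintegral_rpow_enorm_toReal hp₀ hp, enorm_eq_self,
    ENNReal.mul_rpow_of_nonneg _ _ hr]
  have hmul : ∫⁻ z, C ^ p.toReal * (a z.1 ^ p.toReal * b z.2 ^ p.toReal) ∂μ.prod ν
      = C ^ p.toReal * ((∫⁻ x, a x ^ p.toReal ∂μ) * ∫⁻ y, b y ^ p.toReal ∂ν) := by
    rw [← lintegral_prod_mul (ha.pow_const _) (hb.pow_const _)]
    exact lintegral_const_mul'' _ (((ha.pow_const _).comp_fst).mul ((hb.pow_const _).comp_snd))
  rw [hmul, ENNReal.mul_rpow_of_nonneg _ _ hr', ENNReal.mul_rpow_of_nonneg _ _ hr',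
    ← ENNReal.rpow_mul, mul_one_div_cancel hr₀, ENNReal.rpow_one, mul_assoc]

end LpProduct

theorem enorm_integral_mul_mul_le {β E : Type*} [MeasurableSpace β] {ν : Measure β}
    [NormedRing E] [NormedSpace ℝ E] {w u v : β → E} {C : ℝ≥0∞}
    (hw : ∀ᵐ t ∂ν, ‖w t‖ₑ ≤ C) (hu : AEStronglyMeasurable u ν) (hv : AEStronglyMeasurable v ν) :
    ‖∫ t, w t * u t * v t ∂ν‖ₑ ≤ C * (eLpNorm u 2 ν * eLpNorm v 2 ν) := by
  have hHolder : eLpNorm (fun t => u t * v t) 1 ν ≤ eLpNorm u 2 ν * eLpNorm v 2 ν := by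
    simpa using eLpNorm_le_eLpNorm_mul_eLpNorm_of_nnnorm hu hv (· * ·) 1
      (ae_of_all _ fun t => by simpa using nnnorm_mul_le (u t) (v t))
  calc ‖∫ t, w t * u t * v t ∂ν‖ₑ ≤ ∫⁻ t, ‖w t * u t * v t‖ₑ ∂ν :=
        enorm_integral_le_lintegral_enorm _
    _ ≤ ∫⁻ t, C * ‖u t * v t‖ₑ ∂ν := by
        refine lintegral_mono_ae ?_
        filter_upwards [hw] with t ht
        have hmul (x y : E) : ‖x * y‖ₑ ≤ ‖x‖ₑ * ‖y‖ₑ := enorm_smul_le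
        rw [mul_assoc]
        exact (hmul _ _).trans (by gcongr)
    _ = C * eLpNorm (fun t => u t * v t) 1 ν := by
        rw [eLpNorm_one_eq_lintegral_enorm]
        exact lintegral_const_mul'' C (hu.mul hv).enorm
    _ ≤ C * (eLpNorm u 2 ν * eLpNorm v 2 ν) := by gcongr

section MiddleVariable

variable {Ω₁ Ω₂ Ω₃ : Type*} [MeasurableSpace Ω₁] [MeasurableSpace Ω₂] [MeasurableSpace Ω₃]
  {μ₁ : Measure Ω₁} {μ₂ : Measure Ω₂} {μ₃ : Measure Ω₃} [SFinite μ₁] [SFinite μ₂] [SFinite μ₃]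

theorem measurePreserving_insertMiddle :
    MeasurePreserving (fun q : (Ω₁ × Ω₃) × Ω₂ => (q.1.1, q.2, q.1.2))
      ((μ₁.prod μ₃).prod μ₂) (μ₁.prod (μ₂.prod μ₃)) :=
  (measurePreserving_prodAssoc μ₁ μ₂ μ₃).comp
    ((Measure.measurePreserving_swap.prod (MeasurePreserving.id μ₃)).comp
      (((measurePreserving_prodAssoc μ₂ μ₁ μ₃).symm _).comp Measure.measurePreserving_swap))

theorem MeasureTheory.AEStronglyMeasurable.integral_prod_middle {E : Type*}
    [NormedAddCommGroup E] [NormedSpace ℝ E] {G : Ω₁ × Ω₂ × Ω₃ → E}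
    (hG : AEStronglyMeasurable G (μ₁.prod (μ₂.prod μ₃))) :
    AEStronglyMeasurable (fun p : Ω₁ × Ω₃ => ∫ t₂, G (p.1, t₂, p.2) ∂μ₂) (μ₁.prod μ₃) :=
  (hG.comp_measurePreserving measurePreserving_insertMiddle).integral_prod_right'

theorem ae_ae_of_ae_prod_middle {P : Ω₁ × Ω₂ × Ω₃ → Prop}
    (h : ∀ᵐ x ∂μ₁.prod (μ₂.prod μ₃), P x) :
    ∀ᵐ p ∂μ₁.prod μ₃, ∀ᵐ t₂ ∂μ₂, P (p.1, t₂, p.2) :=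
  Measure.ae_ae_of_ae_prod (measurePreserving_insertMiddle.quasiMeasurePreserving.ae h)

variable {E : Type*} [NormedRing E] {φ : Ω₁ × Ω₂ × Ω₃ → E} {K₁ : Ω₁ × Ω₂ → E}
  {K₂ : Ω₂ × Ω₃ → E}

theorem aestronglyMeasurable_integral_mul_mul [NormedSpace ℝ E]
    (hφ : AEStronglyMeasurable φ (μ₁.prod (μ₂.prod μ₃)))
    (hK₁ : AEStronglyMeasurable K₁ (μ₁.prod μ₂)) (hK₂ : AEStronglyMeasurable K₂ (μ₂.prod μ₃)) :
    AEStronglyMeasurable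
      (fun p : Ω₁ × Ω₃ => ∫ t₂, φ (p.1, t₂, p.2) * K₁ (p.1, t₂) * K₂ (t₂, p.2) ∂μ₂)
      (μ₁.prod μ₃) := by
  have hK₁' : AEStronglyMeasurable (fun x : Ω₁ × Ω₂ × Ω₃ => K₁ (x.1, x.2.1))
      (μ₁.prod (μ₂.prod μ₃)) :=
    hK₁.comp_fst.comp_measurePreserving ((measurePreserving_prodAssoc μ₁ μ₂ μ₃).symm _)
  exact ((hφ.mul hK₁').mul hK₂.comp_snd).integral_prod_middle

theorem ae_enorm_integral_mul_mul_le [NormedSpace ℝ E]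
    (hK₁ : AEStronglyMeasurable K₁ (μ₁.prod μ₂)) (hK₂ : AEStronglyMeasurable K₂ (μ₂.prod μ₃)) :
    ∀ᵐ p ∂μ₁.prod μ₃, ‖∫ t₂, φ (p.1, t₂, p.2) * K₁ (p.1, t₂) * K₂ (t₂, p.2) ∂μ₂‖ₑ ≤
      eLpNormEssSup φ (μ₁.prod (μ₂.prod μ₃)) *
        (eLpNorm (fun t₂ => K₁ (p.1, t₂)) 2 μ₂ * eLpNorm (fun t₂ => K₂ (t₂, p.2)) 2 μ₂) := by
  filter_upwards [ae_ae_of_ae_prod_middle (μ₂ := μ₂) (ae_le_eLpNormEssSup (f := φ)),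
    Measure.quasiMeasurePreserving_fst.ae hK₁.prodMk_left,
    Measure.quasiMeasurePreserving_snd.ae hK₂.prodMk_right] with p hφp hK₁p hK₂p
  exact enorm_integral_mul_mul_le hφp hK₁p hK₂p

theorem eLpNorm_integral_mul_mul_le [NormedSpace ℝ E]
    (hK₁ : AEStronglyMeasurable K₁ (μ₁.prod μ₂)) (hK₂ : AEStronglyMeasurable K₂ (μ₂.prod μ₃)) :
    eLpNorm (fun p : Ω₁ × Ω₃ => ∫ t₂, φ (p.1, t₂, p.2) * K₁ (p.1, t₂) * K₂ (t₂, p.2) ∂μ₂)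
        2 (μ₁.prod μ₃) ≤
      eLpNormEssSup φ (μ₁.prod (μ₂.prod μ₃)) * eLpNorm K₁ 2 (μ₁.prod μ₂) *
        eLpNorm K₂ 2 (μ₂.prod μ₃) := by
  refine (eLpNorm_prod_le_of_ae_enorm_le_mul two_ne_zero ENNReal.ofNat_ne_top
    (aemeasurable_eLpNorm_curry two_ne_zero ENNReal.ofNat_ne_top hK₁)
    (aemeasurable_eLpNorm_curry_swap two_ne_zero ENNReal.ofNat_ne_top hK₂)
    (ae_enorm_integral_mul_mul_le (φ := φ) hK₁ hK₂)).trans_eq ?_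
  rw [eLpNorm_eLpNorm_curry two_ne_zero ENNReal.ofNat_ne_top hK₁,
    eLpNorm_eLpNorm_curry_swap two_ne_zero ENNReal.ofNat_ne_top hK₂]

end MiddleVariable

/-- For σ-finite measure spaces, `φ ∈ L^∞(Ω₁ × Ω₂ × Ω₃)`,
`K₁ ∈ L²(Ω₁ × Ω₂)` and `K₂ ∈ L²(Ω₂ × Ω₃)`, the function
`Λ(φ)(K₁,K₂)(t₁,t₃) = ∫ φ(t₁,t₂,t₃) K₁(t₁,t₂) K₂(t₂,t₃) dμ₂(t₂)`
belongs to `L²(Ω₁ × Ω₃)` with `‖Λ(φ)(K₁,K₂)‖₂ ≤ ‖φ‖_∞ ‖K₁‖₂ ‖K₂‖₂`. -/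
theorem stmt_2
    {Ω₁ Ω₂ Ω₃ : Type*} [MeasurableSpace Ω₁] [MeasurableSpace Ω₂] [MeasurableSpace Ω₃]
    (μ₁ : Measure Ω₁) (μ₂ : Measure Ω₂) (μ₃ : Measure Ω₃)
    [SigmaFinite μ₁] [SigmaFinite μ₂] [SigmaFinite μ₃]
    (φ : Ω₁ × Ω₂ × Ω₃ → ℂ) (hφ : MemLp φ ⊤ (μ₁.prod (μ₂.prod μ₃)))
    (K₁ : Ω₁ × Ω₂ → ℂ) (hK₁ : MemLp K₁ 2 (μ₁.prod μ₂))
    (K₂ : Ω₂ × Ω₃ → ℂ) (hK₂ : MemLp K₂ 2 (μ₂.prod μ₃)) :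
    MemLp (fun p : Ω₁ × Ω₃ => ∫ t₂, φ (p.1, t₂, p.2) * K₁ (p.1, t₂) * K₂ (t₂, p.2) ∂μ₂)
        2 (μ₁.prod μ₃) ∧
      eLpNorm (fun p : Ω₁ × Ω₃ => ∫ t₂, φ (p.1, t₂, p.2) * K₁ (p.1, t₂) * K₂ (t₂, p.2) ∂μ₂)
          2 (μ₁.prod μ₃)
        ≤ eLpNormEssSup φ (μ₁.prod (μ₂.prod μ₃)) * eLpNorm K₁ 2 (μ₁.prod μ₂) *
            eLpNorm K₂ 2 (μ₂.prod μ₃) := by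
  have hbound := eLpNorm_integral_mul_mul_le (φ := φ) hK₁.1 hK₂.1
  have hC : eLpNormEssSup φ (μ₁.prod (μ₂.prod μ₃)) < ∞ := eLpNorm_exponent_top (f := φ) ▸ hφ.2
  refine ⟨⟨aestronglyMeasurable_integral_mul_mul hφ.1 hK₁.1 hK₂.1, hbound.trans_lt ?_⟩, hbound⟩
  exact ENNReal.mul_lt_top (ENNReal.mul_lt_top hC hK₁.2) hK₂.2
end

section
/- Let H₁, H₂ be Hilbert spaces, a₁ : Ω₁ → H₁ and a₂ : Ω₂ → H₁ bounded measurable functions on measure spaces (Ω₁, μ₁), (Ω₂, μ₂), and define φ(t₁, t₂) = ⟨a₁(t₁), a₂(t₂)⟩. Then φ ∈ L^∞(Ω₁ × Ω₂) with ‖φ‖_∞ ≤ (ess sup ‖a₁‖)·(ess sup ‖a₂‖), and the Schur multiplication K(t₁,t₂) ↦ φ(t₁,t₂)K(t₁,t₂), for K ∈ L²(Ω₁ × Ω₂), defines a bounded map on the integral operators X_K : L²(Ω₁) → L²(Ω₂), with operator-norm bound ‖X_{φK}‖_{op} ≤ (ess sup ‖a₁‖)(ess sup ‖a₂‖) ‖X_K‖_{op}.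 -/
open MeasureTheory

set_option linter.unusedSectionVars false
set_option maxHeartbeats 1000000

section SchurAux

variable {Ω₁ Ω₂ : Type*} [MeasurableSpace Ω₁] [MeasurableSpace Ω₂]
  {μ₁ : Measure Ω₁} {μ₂ : Measure Ω₂}
  {H₁ : Type*} [NormedAddCommGroup H₁] [InnerProductSpace ℂ H₁] [CompleteSpace H₁]

local notation "⟪" x ", " y "⟫" => @inner ℂ _ _ x y


variable {Ω₁ Ω₂ : Type*} [MeasurableSpace Ω₁] [MeasurableSpace Ω₂]
  {μ₁ : Measure Ω₁} {μ₂ : Measure Ω₂}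
  {H₁ : Type*} [NormedAddCommGroup H₁] [InnerProductSpace ℂ H₁] [CompleteSpace H₁]


lemma aux_mul_int {α : Type*} [MeasurableSpace α] {μ : Measure α} {f g : α → ℂ}
    (hf : MemLp f 2 μ) (hg : MemLp g 2 μ) : Integrable (fun x => f x * g x) μ := by
  have hf' : MemLp (fun x => (starRingEnd ℂ) (f x)) 2 μ :=
    ⟨RCLike.continuous_conj.comp_aestronglyMeasurable hf.1,
      lt_of_le_of_lt (eLpNorm_mono fun x => (RCLike.norm_conj (f x)).le) hf.2⟩
  have h := L2.integrable_inner (𝕜 := ℂ) (hf'.toLp _) (hg.toLp _)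
  refine h.congr ?_
  filter_upwards [hf'.coeFn_toLp, hg.coeFn_toLp] with x h1 h2
  simp [RCLike.inner_apply, h1, h2, mul_comm]

lemma aux_aesm_inner [SigmaFinite μ₁] [SigmaFinite μ₂] {F : Ω₁ → H₁} {G : Ω₂ → H₁}
    (hF : AEStronglyMeasurable F μ₁) (hG : AEStronglyMeasurable G μ₂) :
    AEStronglyMeasurable (fun p : Ω₁ × Ω₂ => ⟪F p.1, G p.2⟫) (μ₁.prod μ₂) :=
  AEStronglyMeasurable.inner
    (hF.comp_quasiMeasurePreserving Measure.quasiMeasurePreserving_fst)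
    (hG.comp_quasiMeasurePreserving Measure.quasiMeasurePreserving_snd)

lemma aux_eLpNorm_two (f : Ω₁ → H₁) :
    eLpNorm f 2 μ₁ = (∫⁻ t, (‖f t‖₊ : ENNReal) ^ (2:ℝ) ∂μ₁) ^ (1/2 : ℝ) := by
  rw [eLpNorm_eq_lintegral_rpow_enorm_toReal two_ne_zero ENNReal.ofNat_ne_top]
  norm_num
  rfl

lemma aux_lintegral_bound [SigmaFinite μ₁] [SigmaFinite μ₂] {K : Ω₁ × Ω₂ → ℂ}
    {F : Ω₁ → H₁} {G : Ω₂ → H₁} (hK : AEStronglyMeasurable K (μ₁.prod μ₂))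
    (hF : AEStronglyMeasurable F μ₁) (hG : AEStronglyMeasurable G μ₂) :
    ∫⁻ p, (‖K p‖₊ : ENNReal) * ((‖F p.1‖₊ : ENNReal) * (‖G p.2‖₊ : ENNReal)) ∂(μ₁.prod μ₂)
      ≤ eLpNorm K 2 (μ₁.prod μ₂) * (eLpNorm F 2 μ₁ * eLpNorm G 2 μ₂) := by
  have h22 : (2:ℝ).HolderConjugate 2 := Real.holderConjugate_iff.2 ⟨one_lt_two, by norm_num⟩
  have hKm : AEMeasurable (fun p => (‖K p‖₊ : ENNReal)) (μ₁.prod μ₂) := hK.enorm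
  have hFm : AEMeasurable (fun t => (‖F t‖₊ : ENNReal)) μ₁ := hF.enorm
  have hGm : AEMeasurable (fun s => (‖G s‖₊ : ENNReal)) μ₂ := hG.enorm
  have hVm : AEMeasurable (fun p : Ω₁ × Ω₂ => (‖F p.1‖₊ : ENNReal) * (‖G p.2‖₊ : ENNReal))
      (μ₁.prod μ₂) :=
    (hFm.comp_quasiMeasurePreserving Measure.quasiMeasurePreserving_fst).mul
      (hGm.comp_quasiMeasurePreserving Measure.quasiMeasurePreserving_snd)
  have h := ENNReal.lintegral_mul_le_Lp_mul_Lq (μ₁.prod μ₂) h22 hKm hVm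
  simp only [Pi.mul_apply] at h
  refine h.trans (le_of_eq ?_)
  have hptw : ∀ p : Ω₁ × Ω₂, ((‖F p.1‖₊ : ENNReal) * (‖G p.2‖₊ : ENNReal)) ^ (2:ℝ)
      = (‖F p.1‖₊ : ENNReal) ^ (2:ℝ) * (‖G p.2‖₊ : ENNReal) ^ (2:ℝ) := fun p =>
    ENNReal.mul_rpow_of_nonneg _ _ (by norm_num)
  rw [aux_eLpNorm_two K, aux_eLpNorm_two F, aux_eLpNorm_two G, lintegral_congr hptw,
    lintegral_prod_mul (hFm.pow aemeasurable_const) (hGm.pow aemeasurable_const),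
    ENNReal.mul_rpow_of_nonneg _ _ (by norm_num : (0:ℝ) ≤ 1/2)]

/-- integrability of the full integrand -/
lemma aux_integrable [SigmaFinite μ₁] [SigmaFinite μ₂] {K : Ω₁ × Ω₂ → ℂ}
    {F : Ω₁ → H₁} {G : Ω₂ → H₁} (hK : MemLp K 2 (μ₁.prod μ₂))
    (hF : MemLp F 2 μ₁) (hG : MemLp G 2 μ₂) :
    Integrable (fun p : Ω₁ × Ω₂ => K p * ⟪F p.1, G p.2⟫) (μ₁.prod μ₂) := by
  refine ⟨hK.1.mul (aux_aesm_inner hF.1 hG.1), ?_⟩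
  rw [hasFiniteIntegral_def]
  calc ∫⁻ p, (‖K p * ⟪F p.1, G p.2⟫‖₊ : ENNReal) ∂(μ₁.prod μ₂)
      ≤ ∫⁻ p, (‖K p‖₊ : ENNReal) * ((‖F p.1‖₊ : ENNReal) * (‖G p.2‖₊ : ENNReal))
          ∂(μ₁.prod μ₂) := by
        refine lintegral_mono fun p => ?_
        rw [nnnorm_mul, ENNReal.coe_mul]
        gcongr
        calc (‖⟪F p.1, G p.2⟫‖₊ : ENNReal) ≤ (‖F p.1‖₊ * ‖G p.2‖₊ : NNReal) := by
              exact_mod_cast norm_inner_le_norm (𝕜 := ℂ) _ _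
          _ = _ := ENNReal.coe_mul _ _
    _ ≤ eLpNorm K 2 (μ₁.prod μ₂) * (eLpNorm F 2 μ₁ * eLpNorm G 2 μ₂) :=
        aux_lintegral_bound hK.1 hF.1 hG.1
    _ < ⊤ := by
        exact ENNReal.mul_lt_top hK.2 (ENNReal.mul_lt_top hF.2 hG.2)

/-- norm bound on the full integral -/
lemma aux_norm_bound [SigmaFinite μ₁] [SigmaFinite μ₂] {K : Ω₁ × Ω₂ → ℂ}
    {F : Ω₁ → H₁} {G : Ω₂ → H₁} (hK : MemLp K 2 (μ₁.prod μ₂))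
    (hF : MemLp F 2 μ₁) (hG : MemLp G 2 μ₂) :
    ‖∫ p, K p * ⟪F p.1, G p.2⟫ ∂(μ₁.prod μ₂)‖
      ≤ (eLpNorm K 2 (μ₁.prod μ₂)).toReal
          * ((eLpNorm F 2 μ₁).toReal * (eLpNorm G 2 μ₂).toReal) := by
  refine (norm_integral_le_lintegral_norm _).trans ?_
  rw [← ENNReal.toReal_mul, ← ENNReal.toReal_mul]
  refine ENNReal.toReal_mono
    (by exact (ENNReal.mul_lt_top hK.2 (ENNReal.mul_lt_top hF.2 hG.2)).ne) ?_
  refine le_trans ?_ (aux_lintegral_bound hK.1 hF.1 hG.1)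
  refine lintegral_mono fun p => ?_
  rw [ofReal_norm, enorm_eq_nnnorm, nnnorm_mul, ENNReal.coe_mul]
  gcongr
  calc (‖⟪F p.1, G p.2⟫‖₊ : ENNReal) ≤ (‖F p.1‖₊ * ‖G p.2‖₊ : NNReal) := by
        exact_mod_cast norm_inner_le_norm (𝕜 := ℂ) _ _
    _ = _ := ENNReal.coe_mul _ _

/-- a.e. slices of an L² kernel are L² -/
lemma aux_slice [SigmaFinite μ₁] [SigmaFinite μ₂] {K : Ω₁ × Ω₂ → ℂ}
    (hK : MemLp K 2 (μ₁.prod μ₂)) :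
    ∀ᵐ s ∂μ₂, MemLp (fun t => K (t, s)) 2 μ₁ := by
  have hsq : Integrable (fun p => ‖K p‖ ^ 2) (μ₁.prod μ₂) := by
    have h := hK.integrable_norm_rpow two_ne_zero ENNReal.ofNat_ne_top
    refine h.congr ?_
    refine Filter.Eventually.of_forall fun p => ?_
    norm_num
  have hslice := hsq.prod_left_ae
  have haesm : ∀ᵐ s ∂μ₂, AEStronglyMeasurable (fun t => K (t, s)) μ₁ := by
    have hswap : AEStronglyMeasurable (K ∘ Prod.swap) (μ₂.prod μ₁) :=
      hK.1.comp_quasiMeasurePreserving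
        (Measure.measurePreserving_swap (μ := μ₂) (ν := μ₁)).quasiMeasurePreserving
    exact hswap.prodMk_left
  filter_upwards [hslice, haesm] with s h1 h2
  exact (memLp_two_iff_integrable_sq_norm h2).2 h1

/-- L² norm squared as an integral -/
lemma aux_norm_sq {α : Type*} [MeasurableSpace α] {μ : Measure α} {f : α → H₁}
    (hf : MemLp f 2 μ) :
    ∫ x, ‖f x‖ ^ 2 ∂μ = ((eLpNorm f 2 μ).toReal) ^ 2 := by
  have fL : Lp H₁ 2 μ := MemLp.toLp f hf
  have h1 : ‖MemLp.toLp f hf‖ = (eLpNorm f 2 μ).toReal := Lp.norm_toLp f hf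
  have h2 : ‖MemLp.toLp f hf‖ ^ 2 = RCLike.re (K := ℂ) (inner ℂ (MemLp.toLp f hf) (MemLp.toLp f hf)) := norm_sq_eq_re_inner (𝕜 := ℂ) _
  rw [L2.inner_def] at h2
  rw [← integral_re (L2.integrable_inner (𝕜 := ℂ) (MemLp.toLp f hf) (MemLp.toLp f hf))] at h2
  have h3 : ∫ x, RCLike.re (K := ℂ) ⟪(MemLp.toLp f hf : α → H₁) x, (MemLp.toLp f hf : α → H₁) x⟫ ∂μ
      = ∫ x, ‖f x‖ ^ 2 ∂μ := by
    refine integral_congr_ae ?_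
    filter_upwards [hf.coeFn_toLp] with x hx
    rw [hx, inner_self_eq_norm_sq]
  rw [← h1, h2, h3]


lemma aux_finite [SigmaFinite μ₁] [SigmaFinite μ₂] {K : Ω₁ × Ω₂ → ℂ}
    (hK : MemLp K 2 (μ₁.prod μ₂)) (T : Lp ℂ 2 μ₁ →L[ℂ] Lp ℂ 2 μ₂)
    (hT : ∀ f : Lp ℂ 2 μ₁, ∀ᵐ s ∂μ₂, (T f : Ω₂ → ℂ) s = ∫ t, K (t, s) * f t ∂μ₁)
    (E : Submodule ℂ H₁) [FiniteDimensional ℂ E]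
    {F : Ω₁ → H₁} {G : Ω₂ → H₁} (hF : MemLp F 2 μ₁) (hG : MemLp G 2 μ₂)
    (hFE : ∀ t, F t ∈ E) (hGE : ∀ s, G s ∈ E) :
    ‖∫ p, K p * ⟪F p.1, G p.2⟫ ∂(μ₁.prod μ₂)‖
      ≤ ‖T‖ * ((eLpNorm F 2 μ₁).toReal * (eLpNorm G 2 μ₂).toReal) := by
  classical
  set b := stdOrthonormalBasis ℂ E with hb
  set n := Module.finrank ℂ E with hn
  -- inner product expansion
  have hexp : ∀ (x y : H₁), x ∈ E → y ∈ E →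
      ⟪x, y⟫ = ∑ i : Fin n, ⟪x, (b i : H₁)⟫ * ⟪(b i : H₁), y⟫ := by
    intro x y hx hy
    have h := b.sum_inner_mul_inner (⟨x, hx⟩ : E) ⟨y, hy⟩
    simp only [Submodule.coe_inner] at h
    exact h.symm
  -- pointwise Parseval
  have hpar : ∀ (x : H₁), x ∈ E → ∑ i : Fin n, ‖⟪x, (b i : H₁)⟫‖ ^ 2 = ‖x‖ ^ 2 := by
    intro x hx
    have h := congrArg (RCLike.re (K := ℂ)) (hexp x x hx hx)
    rw [inner_self_eq_norm_sq, map_sum] at h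
    rw [h]
    refine Finset.sum_congr rfl fun i _ => ?_
    rw [← inner_conj_symm ((b i : H₁)) x, RCLike.mul_conj, ← RCLike.ofReal_pow,
      RCLike.ofReal_re]
  have hbne : ∀ i : Fin n, ‖(b i : H₁)‖ = 1 := fun i => by
    exact b.orthonormal.1 i
  -- coordinate functions
  have hfim : ∀ i : Fin n, MemLp (fun t => ⟪F t, (b i : H₁)⟫) 2 μ₁ := fun i => by
    refine hF.of_le (hF.1.inner aestronglyMeasurable_const) ?_
    refine Filter.Eventually.of_forall fun t => ?_
    calc ‖⟪F t, (b i : H₁)⟫‖ ≤ ‖F t‖ * ‖(b i : H₁)‖ := norm_inner_le_norm _ _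
      _ = ‖F t‖ := by rw [hbne i, mul_one]
  have hgim : ∀ i : Fin n, MemLp (fun s => ⟪G s, (b i : H₁)⟫) 2 μ₂ := fun i => by
    refine hG.of_le (hG.1.inner aestronglyMeasurable_const) ?_
    refine Filter.Eventually.of_forall fun s => ?_
    calc ‖⟪G s, (b i : H₁)⟫‖ ≤ ‖G s‖ * ‖(b i : H₁)‖ := norm_inner_le_norm _ _
      _ = ‖G s‖ := by rw [hbne i, mul_one]
  have hgim' : ∀ i : Fin n, MemLp (fun s => ⟪(b i : H₁), G s⟫) 2 μ₂ := fun i => by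
    refine hG.of_le (aestronglyMeasurable_const.inner hG.1) ?_
    refine Filter.Eventually.of_forall fun s => ?_
    calc ‖⟪(b i : H₁), G s⟫‖ ≤ ‖(b i : H₁)‖ * ‖G s‖ := norm_inner_le_norm _ _
      _ = ‖G s‖ := by rw [hbne i, one_mul]
  set fL : Fin n → Lp ℂ 2 μ₁ := fun i => (hfim i).toLp _ with hfL
  set gL : Fin n → Lp ℂ 2 μ₂ := fun i => (hgim i).toLp _ with hgL
  -- sums of squared norms
  have hsumf : ∑ i : Fin n, ‖fL i‖ ^ 2 = ((eLpNorm F 2 μ₁).toReal) ^ 2 := by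
    have h1 : ∀ i : Fin n, ‖fL i‖ ^ 2 = ∫ t, ‖⟪F t, (b i : H₁)⟫‖ ^ 2 ∂μ₁ := fun i => by
      rw [hfL, Lp.norm_toLp _ (hfim i), ← aux_norm_sq (hfim i)]
    rw [Finset.sum_congr rfl fun i _ => h1 i,
      ← integral_finset_sum _ (fun i _ =>
        (memLp_two_iff_integrable_sq_norm (hfim i).1).1 (hfim i)),
      ← aux_norm_sq hF]
    exact integral_congr_ae (Filter.Eventually.of_forall fun t => hpar (F t) (hFE t))
  have hsumg : ∑ i : Fin n, ‖gL i‖ ^ 2 = ((eLpNorm G 2 μ₂).toReal) ^ 2 := by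
    have h1 : ∀ i : Fin n, ‖gL i‖ ^ 2 = ∫ s, ‖⟪G s, (b i : H₁)⟫‖ ^ 2 ∂μ₂ := fun i => by
      rw [hgL, Lp.norm_toLp _ (hgim i), ← aux_norm_sq (hgim i)]
    rw [Finset.sum_congr rfl fun i _ => h1 i,
      ← integral_finset_sum _ (fun i _ =>
        (memLp_two_iff_integrable_sq_norm (hgim i).1).1 (hgim i)),
      ← aux_norm_sq hG]
    exact integral_congr_ae (Filter.Eventually.of_forall fun s => hpar (G s) (hGE s))
  -- identification of the integral
  have hmain : ∫ p, K p * ⟪F p.1, G p.2⟫ ∂(μ₁.prod μ₂)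
      = ∑ i : Fin n, (inner ℂ (gL i) (T (fL i)) : ℂ) := by
    rw [integral_prod_symm _ (aux_integrable hK hF hG)]
    have hstep : ∫ s, (∫ t, K (t, s) * ⟪F t, G s⟫ ∂μ₁) ∂μ₂
        = ∫ s, (∑ i : Fin n, ⟪(b i : H₁), G s⟫ * (T (fL i) : Ω₂ → ℂ) s) ∂μ₂ := by
      refine integral_congr_ae ?_
      filter_upwards [aux_slice hK,
        ae_all_iff.2 (fun i : Fin n => hT (fL i))] with s h1 h2
      calc ∫ t, K (t, s) * ⟪F t, G s⟫ ∂μ₁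
          = ∫ t, ∑ i : Fin n, ⟪(b i : H₁), G s⟫ * (K (t, s) * ⟪F t, (b i : H₁)⟫) ∂μ₁ := by
            refine integral_congr_ae (Filter.Eventually.of_forall fun t => ?_)
            show K (t, s) * ⟪F t, G s⟫
              = ∑ i : Fin n, ⟪(b i : H₁), G s⟫ * (K (t, s) * ⟪F t, (b i : H₁)⟫)
            rw [hexp (F t) (G s) (hFE t) (hGE s), Finset.mul_sum]
            exact Finset.sum_congr rfl fun i _ => by ring
        _ = ∑ i : Fin n, ∫ t, ⟪(b i : H₁), G s⟫ * (K (t, s) * ⟪F t, (b i : H₁)⟫) ∂μ₁ :=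
            integral_finset_sum _ fun i _ => (aux_mul_int h1 (hfim i)).const_mul _
        _ = ∑ i : Fin n, ⟪(b i : H₁), G s⟫ * (T (fL i) : Ω₂ → ℂ) s := by
            refine Finset.sum_congr rfl fun i _ => ?_
            rw [integral_const_mul]
            congr 1
            rw [h2 i]
            refine integral_congr_ae ?_
            filter_upwards [(hfim i).coeFn_toLp] with t ht
            rw [ht]
    rw [hstep, integral_finset_sum _ (fun i _ =>
      aux_mul_int (hgim' i) (Lp.memLp (T (fL i))))]
    refine Finset.sum_congr rfl fun i _ => ?_
    rw [L2.inner_def]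
    refine integral_congr_ae ?_
    filter_upwards [(hgim i).coeFn_toLp] with s hs
    rw [RCLike.inner_apply, hs, inner_conj_symm, mul_comm]
  -- final estimate
  rw [hmain]
  have hCS : ∑ i : Fin n, ‖fL i‖ * ‖gL i‖
      ≤ (eLpNorm F 2 μ₁).toReal * (eLpNorm G 2 μ₂).toReal := by
    have h := Finset.sum_mul_sq_le_sq_mul_sq Finset.univ (fun i => ‖fL i‖) (fun i => ‖gL i‖)
    rw [hsumf, hsumg] at h
    have h1 : (0:ℝ) ≤ ∑ i : Fin n, ‖fL i‖ * ‖gL i‖ :=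
      Finset.sum_nonneg fun i _ => mul_nonneg (norm_nonneg _) (norm_nonneg _)
    have h2 : (0:ℝ) ≤ (eLpNorm F 2 μ₁).toReal := ENNReal.toReal_nonneg
    have h3 : (0:ℝ) ≤ (eLpNorm G 2 μ₂).toReal := ENNReal.toReal_nonneg
    nlinarith [h, h1, mul_nonneg h2 h3]
  calc ‖∑ i : Fin n, (inner ℂ (gL i) (T (fL i)) : ℂ)‖
      ≤ ∑ i : Fin n, ‖(inner ℂ (gL i) (T (fL i)) : ℂ)‖ := norm_sum_le _ _
    _ ≤ ∑ i : Fin n, ‖T‖ * (‖fL i‖ * ‖gL i‖) := by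
        refine Finset.sum_le_sum fun i _ => ?_
        calc ‖(inner ℂ (gL i) (T (fL i)) : ℂ)‖ ≤ ‖gL i‖ * ‖T (fL i)‖ := norm_inner_le_norm _ _
          _ ≤ ‖gL i‖ * (‖T‖ * ‖fL i‖) := by
              have := T.le_opNorm (fL i)
              exact mul_le_mul_of_nonneg_left this (norm_nonneg _)
          _ = ‖T‖ * (‖fL i‖ * ‖gL i‖) := by ring
    _ = ‖T‖ * ∑ i : Fin n, ‖fL i‖ * ‖gL i‖ := by rw [Finset.mul_sum]
    _ ≤ ‖T‖ * ((eLpNorm F 2 μ₁).toReal * (eLpNorm G 2 μ₂).toReal) := by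
        exact mul_le_mul_of_nonneg_left hCS (norm_nonneg _)


lemma aux_core [SigmaFinite μ₁] [SigmaFinite μ₂] {K : Ω₁ × Ω₂ → ℂ}
    (hK : MemLp K 2 (μ₁.prod μ₂)) (T : Lp ℂ 2 μ₁ →L[ℂ] Lp ℂ 2 μ₂)
    (hT : ∀ f : Lp ℂ 2 μ₁, ∀ᵐ s ∂μ₂, (T f : Ω₂ → ℂ) s = ∫ t, K (t, s) * f t ∂μ₁)
    {F : Ω₁ → H₁} {G : Ω₂ → H₁} (hF : MemLp F 2 μ₁) (hG : MemLp G 2 μ₂) :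
    ‖∫ p, K p * ⟪F p.1, G p.2⟫ ∂(μ₁.prod μ₂)‖
      ≤ ‖T‖ * ((eLpNorm F 2 μ₁).toReal * (eLpNorm G 2 μ₂).toReal) := by
  classical
  set eK : ℝ := (eLpNorm K 2 (μ₁.prod μ₂)).toReal with heK
  set eF : ℝ := (eLpNorm F 2 μ₁).toReal with heF
  set eG : ℝ := (eLpNorm G 2 μ₂).toReal with heG
  have heK0 : 0 ≤ eK := ENNReal.toReal_nonneg
  have heF0 : 0 ≤ eF := ENNReal.toReal_nonneg
  have heG0 : 0 ≤ eG := ENNReal.toReal_nonneg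
  have hT0 : (0:ℝ) ≤ ‖T‖ := norm_nonneg _
  refine le_of_forall_pos_le_add fun ε hε => ?_
  set D : ℝ := (‖T‖ + eK) * (eF + eG + 1) + 1 with hD
  have hD0 : 0 < D := by positivity
  set δ : ℝ := min 1 (ε / D) with hδ
  have hδ0 : 0 < δ := lt_min one_pos (div_pos hε hD0)
  have hδ1 : δ ≤ 1 := min_le_left _ _
  have hδD : δ * D ≤ ε := by
    rw [← le_div_iff₀ hD0]
    exact min_le_right _ _
  obtain ⟨F', hF'1, hF'2⟩ := hF.exists_simpleFunc_eLpNorm_sub_lt ENNReal.ofNat_ne_top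
    (ε := ENNReal.ofReal δ) (ENNReal.ofReal_pos.2 hδ0).ne'
  obtain ⟨G', hG'1, hG'2⟩ := hG.exists_simpleFunc_eLpNorm_sub_lt ENNReal.ofNat_ne_top
    (ε := ENNReal.ofReal δ) (ENNReal.ofReal_pos.2 hδ0).ne'
  set E : Submodule ℂ H₁ := Submodule.span ℂ (Set.range ⇑F' ∪ Set.range ⇑G') with hE
  haveI : FiniteDimensional ℂ E :=
    FiniteDimensional.span_of_finite ℂ ((F'.finite_range).union (G'.finite_range))
  have hFE' : ∀ t, F' t ∈ E := fun t =>
    Submodule.subset_span (Set.mem_union_left _ (Set.mem_range_self t))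
  have hGE' : ∀ s, G' s ∈ E := fun s =>
    Submodule.subset_span (Set.mem_union_right _ (Set.mem_range_self s))
  -- numeric bounds on the approximants
  have hd1 : (eLpNorm (F - ⇑F') 2 μ₁).toReal ≤ δ :=
    ENNReal.toReal_le_of_le_ofReal hδ0.le hF'1.le
  have hd2 : (eLpNorm (G - ⇑G') 2 μ₂).toReal ≤ δ :=
    ENNReal.toReal_le_of_le_ofReal hδ0.le hG'1.le
  have heF' : (eLpNorm ⇑F' 2 μ₁).toReal ≤ eF + δ := by
    have h1 : eLpNorm ⇑F' 2 μ₁ ≤ eLpNorm F 2 μ₁ + ENNReal.ofReal δ := by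
      have h2 : eLpNorm ⇑F' 2 μ₁ = eLpNorm (F - (F - ⇑F')) 2 μ₁ := by
        congr 1; funext t; simp
      rw [h2]
      exact (eLpNorm_sub_le hF.1 (hF.1.sub hF'2.1) one_le_two).trans
        (add_le_add le_rfl hF'1.le)
    refine (ENNReal.toReal_mono (ENNReal.add_lt_top.2 ⟨hF.2, ENNReal.ofReal_lt_top⟩).ne h1).trans ?_
    rw [ENNReal.toReal_add hF.2.ne ENNReal.ofReal_ne_top, ENNReal.toReal_ofReal hδ0.le]
  have heG' : (eLpNorm ⇑G' 2 μ₂).toReal ≤ eG + δ := by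
    have h1 : eLpNorm ⇑G' 2 μ₂ ≤ eLpNorm G 2 μ₂ + ENNReal.ofReal δ := by
      have h2 : eLpNorm ⇑G' 2 μ₂ = eLpNorm (G - (G - ⇑G')) 2 μ₂ := by
        congr 1; funext t; simp
      rw [h2]
      exact (eLpNorm_sub_le hG.1 (hG.1.sub hG'2.1) one_le_two).trans
        (add_le_add le_rfl hG'1.le)
    refine (ENNReal.toReal_mono (ENNReal.add_lt_top.2 ⟨hG.2, ENNReal.ofReal_lt_top⟩).ne h1).trans ?_
    rw [ENNReal.toReal_add hG.2.ne ENNReal.ofReal_ne_top, ENNReal.toReal_ofReal hδ0.le]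
  -- decomposition
  set X : ℂ := ∫ p, K p * ⟪F p.1, G p.2⟫ ∂(μ₁.prod μ₂) with hX
  set Y : ℂ := ∫ p, K p * ⟪F' p.1, G p.2⟫ ∂(μ₁.prod μ₂) with hY
  set Z : ℂ := ∫ p, K p * ⟪F' p.1, G' p.2⟫ ∂(μ₁.prod μ₂) with hZ
  have d1 : ∫ p, K p * ⟪(F - ⇑F') p.1, G p.2⟫ ∂(μ₁.prod μ₂) = X - Y := by
    rw [hX, hY, ← integral_sub (aux_integrable hK hF hG) (aux_integrable hK hF'2 hG)]
    refine integral_congr_ae (Filter.Eventually.of_forall fun p => ?_)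
    show K p * ⟪(F - ⇑F') p.1, G p.2⟫ = K p * ⟪F p.1, G p.2⟫ - K p * ⟪F' p.1, G p.2⟫
    simp only [Pi.sub_apply, inner_sub_left]
    ring
  have d2 : ∫ p, K p * ⟪F' p.1, (G - ⇑G') p.2⟫ ∂(μ₁.prod μ₂) = Y - Z := by
    rw [hY, hZ, ← integral_sub (aux_integrable hK hF'2 hG) (aux_integrable hK hF'2 hG'2)]
    refine integral_congr_ae (Filter.Eventually.of_forall fun p => ?_)
    show K p * ⟪F' p.1, (G - ⇑G') p.2⟫ = K p * ⟪F' p.1, G p.2⟫ - K p * ⟪F' p.1, G' p.2⟫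
    simp only [Pi.sub_apply, inner_sub_right]
    ring
  have hb1 : ‖X - Y‖ ≤ eK * (δ * eG) := by
    rw [← d1]
    refine (aux_norm_bound hK (hF.sub hF'2) hG).trans ?_
    exact mul_le_mul_of_nonneg_left
      (mul_le_mul_of_nonneg_right hd1 heG0) heK0
  have hb2 : ‖Y - Z‖ ≤ eK * ((eF + δ) * δ) := by
    rw [← d2]
    refine (aux_norm_bound hK hF'2 (hG.sub hG'2)).trans ?_
    exact mul_le_mul_of_nonneg_left
      (mul_le_mul heF' hd2 ENNReal.toReal_nonneg (by linarith)) heK0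
  have hb3 : ‖Z‖ ≤ ‖T‖ * ((eF + δ) * (eG + δ)) := by
    rw [hZ]
    refine (aux_finite hK T hT E hF'2 hG'2 hFE' hGE').trans ?_
    exact mul_le_mul_of_nonneg_left
      (mul_le_mul heF' heG' ENNReal.toReal_nonneg (by linarith)) hT0
  have hsplit : ‖X‖ ≤ ‖X - Y‖ + (‖Y - Z‖ + ‖Z‖) := by
    have hXe : X = (X - Y) + ((Y - Z) + Z) := by ring
    calc ‖X‖ = ‖(X - Y) + ((Y - Z) + Z)‖ := by rw [← hXe]
      _ ≤ ‖X - Y‖ + ‖(Y - Z) + Z‖ := norm_add_le _ _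
      _ ≤ ‖X - Y‖ + (‖Y - Z‖ + ‖Z‖) := by
          exact add_le_add le_rfl (norm_add_le _ _)
  have hfinal : ‖X‖ ≤ ‖T‖ * (eF * eG) + δ * D := by
    have h := hsplit.trans (add_le_add hb1 (add_le_add hb2 hb3))
    refine h.trans ?_
    nlinarith [mul_nonneg hδ0.le hδ0.le, mul_nonneg heK0 hδ0.le,
      mul_nonneg hT0 hδ0.le, mul_nonneg heF0 heG0,
      mul_nonneg (mul_nonneg hT0 hδ0.le) hδ0.le,
      mul_nonneg (mul_nonneg heK0 hδ0.le) hδ0.le]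
  exact hfinal.trans (by linarith)

end SchurAux

/-- Let `a₁ : Ω₁ → H₁`, `a₂ : Ω₂ → H₁` be bounded measurable
Hilbert-space-valued functions and `φ(t₁,t₂) = ⟨a₁(t₁), a₂(t₂)⟩`. Then
`φ ∈ L^∞(Ω₁ × Ω₂)` with `‖φ‖_∞ ≤ (ess sup ‖a₁‖)(ess sup ‖a₂‖)`, and Schur
multiplication by `φ` is bounded on integral operators: if `X_K` and `X_{φK}`
are the integral operators with kernels `K ∈ L²` and `φ·K`, then
`‖X_{φK}‖_op ≤ (ess sup ‖a₁‖)(ess sup ‖a₂‖) ‖X_K‖_op`. -/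
theorem stmt_12
    {Ω₁ Ω₂ : Type*} [MeasurableSpace Ω₁] [MeasurableSpace Ω₂]
    (μ₁ : Measure Ω₁) (μ₂ : Measure Ω₂) [SigmaFinite μ₁] [SigmaFinite μ₂]
    {H₁ : Type*} [NormedAddCommGroup H₁] [InnerProductSpace ℂ H₁] [CompleteSpace H₁]
    (a₁ : Ω₁ → H₁) (a₂ : Ω₂ → H₁)
    (ha₁m : AEStronglyMeasurable a₁ μ₁) (ha₂m : AEStronglyMeasurable a₂ μ₂)
    (C₁ C₂ : ℝ) (hC₁ : 0 ≤ C₁) (hC₂ : 0 ≤ C₂)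
    (ha₁ : ∀ᵐ t ∂μ₁, ‖a₁ t‖ ≤ C₁) (ha₂ : ∀ᵐ t ∂μ₂, ‖a₂ t‖ ≤ C₂) :
    (MemLp (fun p : Ω₁ × Ω₂ => (inner ℂ (a₁ p.1) (a₂ p.2) : ℂ)) ⊤ (μ₁.prod μ₂) ∧
      eLpNormEssSup (fun p : Ω₁ × Ω₂ => (inner ℂ (a₁ p.1) (a₂ p.2) : ℂ)) (μ₁.prod μ₂)
        ≤ ENNReal.ofReal (C₁ * C₂)) ∧
    ∀ (K : Ω₁ × Ω₂ → ℂ), MemLp K 2 (μ₁.prod μ₂) →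
      ∀ (T S : Lp ℂ 2 μ₁ →L[ℂ] Lp ℂ 2 μ₂),
        (∀ f : Lp ℂ 2 μ₁, ∀ᵐ s ∂μ₂, (T f : Ω₂ → ℂ) s = ∫ t, K (t, s) * f t ∂μ₁) →
        (∀ f : Lp ℂ 2 μ₁, ∀ᵐ s ∂μ₂,
          (S f : Ω₂ → ℂ) s = ∫ t, (inner ℂ (a₁ t) (a₂ s) : ℂ) * K (t, s) * f t ∂μ₁) →
        ‖S‖ ≤ C₁ * C₂ * ‖T‖ := by
  have hbd : ∀ᵐ p ∂(μ₁.prod μ₂), ‖(inner ℂ (a₁ p.1) (a₂ p.2) : ℂ)‖ ≤ C₁ * C₂ := by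
    filter_upwards [Measure.quasiMeasurePreserving_fst.ae (μa := μ₁.prod μ₂) ha₁,
      Measure.quasiMeasurePreserving_snd.ae (μa := μ₁.prod μ₂) ha₂] with p hp1 hp2
    exact (norm_inner_le_norm _ _).trans
      (mul_le_mul hp1 hp2 (norm_nonneg _) hC₁)
  have hess := eLpNormEssSup_le_of_ae_bound hbd
  refine ⟨⟨⟨aux_aesm_inner ha₁m ha₂m, ?_⟩, hess⟩, ?_⟩
  · rw [eLpNorm_exponent_top]
    exact lt_of_le_of_lt hess ENNReal.ofReal_lt_top
  intro K hK T S hT hS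
  have hM0 : (0:ℝ) ≤ C₁ * C₂ * ‖T‖ := by positivity
  refine S.opNorm_le_bound hM0 fun f => ?_
  -- the key inner-product estimate
  have key : ∀ g : Lp ℂ 2 μ₂,
      ‖(inner ℂ g (S f) : ℂ)‖ ≤ ‖T‖ * ((C₁ * ‖f‖) * (C₂ * ‖g‖)) := by
    intro g
    set F : Ω₁ → H₁ := fun t => (starRingEnd ℂ) ((f : Ω₁ → ℂ) t) • a₁ t with hF
    set G : Ω₂ → H₁ := fun s => (starRingEnd ℂ) ((g : Ω₂ → ℂ) s) • a₂ s with hG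
    have hFm : AEStronglyMeasurable F μ₁ :=
      (RCLike.continuous_conj.comp_aestronglyMeasurable
        (Lp.aestronglyMeasurable f)).smul ha₁m
    have hGm : AEStronglyMeasurable G μ₂ :=
      (RCLike.continuous_conj.comp_aestronglyMeasurable
        (Lp.aestronglyMeasurable g)).smul ha₂m
    have hFbd : ∀ᵐ t ∂μ₁, ‖F t‖ ≤ C₁ * ‖(f : Ω₁ → ℂ) t‖ := by
      filter_upwards [ha₁] with t ht
      rw [hF, norm_smul, RCLike.norm_conj, mul_comm]
      exact mul_le_mul_of_nonneg_right ht (norm_nonneg _)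
    have hGbd : ∀ᵐ s ∂μ₂, ‖G s‖ ≤ C₂ * ‖(g : Ω₂ → ℂ) s‖ := by
      filter_upwards [ha₂] with s hs
      rw [hG, norm_smul, RCLike.norm_conj, mul_comm]
      exact mul_le_mul_of_nonneg_right hs (norm_nonneg _)
    have hFp : MemLp F 2 μ₁ := MemLp.of_le_mul (Lp.memLp f) hFm hFbd
    have hGp : MemLp G 2 μ₂ := MemLp.of_le_mul (Lp.memLp g) hGm hGbd
    have heF : (eLpNorm F 2 μ₁).toReal ≤ C₁ * ‖f‖ := by
      have h1 : eLpNorm F 2 μ₁ ≤ eLpNorm ((C₁:ℂ) • ⇑f) 2 μ₁ := by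
        refine eLpNorm_mono_ae ?_
        filter_upwards [hFbd] with t ht
        refine ht.trans (le_of_eq ?_)
        rw [Pi.smul_apply, norm_smul]
        norm_num [abs_of_nonneg hC₁]
      rw [eLpNorm_const_smul] at h1
      refine (ENNReal.toReal_mono
        (ENNReal.mul_ne_top ENNReal.coe_ne_top (Lp.eLpNorm_ne_top f)) h1).trans ?_
      rw [ENNReal.toReal_mul, ENNReal.coe_toReal, coe_nnnorm, Lp.norm_def]
      norm_num [abs_of_nonneg hC₁]
    have heG : (eLpNorm G 2 μ₂).toReal ≤ C₂ * ‖g‖ := by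
      have h1 : eLpNorm G 2 μ₂ ≤ eLpNorm ((C₂:ℂ) • ⇑g) 2 μ₂ := by
        refine eLpNorm_mono_ae ?_
        filter_upwards [hGbd] with s hs
        refine hs.trans (le_of_eq ?_)
        rw [Pi.smul_apply, norm_smul]
        norm_num [abs_of_nonneg hC₂]
      rw [eLpNorm_const_smul] at h1
      refine (ENNReal.toReal_mono
        (ENNReal.mul_ne_top ENNReal.coe_ne_top (Lp.eLpNorm_ne_top g)) h1).trans ?_
      rw [ENNReal.toReal_mul, ENNReal.coe_toReal, coe_nnnorm, Lp.norm_def]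
      norm_num [abs_of_nonneg hC₂]
    have hiden : (inner ℂ g (S f) : ℂ)
        = ∫ p, K p * (inner ℂ (F p.1) (G p.2) : ℂ) ∂(μ₁.prod μ₂) := by
      rw [integral_prod_symm _ (aux_integrable hK hFp hGp), L2.inner_def]
      refine integral_congr_ae ?_
      filter_upwards [hS f] with s hs
      rw [RCLike.inner_apply, mul_comm ((S f : Ω₂ → ℂ) s), hs, ← integral_const_mul]
      refine integral_congr_ae (Filter.Eventually.of_forall fun t => ?_)
      show (starRingEnd ℂ) ((g : Ω₂ → ℂ) s)
          * ((inner ℂ (a₁ t) (a₂ s) : ℂ) * K (t, s) * (f : Ω₁ → ℂ) t)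
        = K (t, s) * (inner ℂ (F t) (G s) : ℂ)
      rw [hF, hG, inner_smul_left, inner_smul_right, RCLike.conj_conj]
      ring
    rw [hiden]
    refine (aux_core hK T hT hFp hGp).trans ?_
    exact mul_le_mul_of_nonneg_left
      (mul_le_mul heF heG ENNReal.toReal_nonneg (by positivity)) (norm_nonneg _)
  have hsq : ‖S f‖ ^ 2 ≤ ‖T‖ * ((C₁ * ‖f‖) * (C₂ * ‖S f‖)) := by
    calc ‖S f‖ ^ 2 = RCLike.re (K := ℂ) (inner ℂ (S f) (S f)) := norm_sq_eq_re_inner (𝕜 := ℂ) _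
      _ ≤ ‖(inner ℂ (S f) (S f) : ℂ)‖ := RCLike.re_le_norm _
      _ ≤ ‖T‖ * ((C₁ * ‖f‖) * (C₂ * ‖S f‖)) := key (S f)
  rcases eq_or_lt_of_le (norm_nonneg (S f)) with h0 | h0
  · rw [← h0]
    positivity
  · have h1 : ‖S f‖ * ‖S f‖ ≤ (C₁ * C₂ * ‖T‖ * ‖f‖) * ‖S f‖ := by nlinarith
    exact le_of_mul_le_mul_right h1 h0
end
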